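/- arXiv:1410.1574 — 3 statements merged into one kernel-verified Lean document; each statement's English description precedes it below -/
import Mathlib

section
/- Let f = χ_{[0,∞)} on ℝ. For every x ≥ 0, the series ∑_{k ∈ ℤ} |M_{[x-2^k,x)} f(x) − E_k f(x)|² diverges (equals +∞), where M_{[x-2^k,x)} f(x) = 2^{-k} ∫_{x-2^k}^x f and E_k f(x) is the average of f over the dyadic interval of length 2^k containing x. Consequently the square function S_𝓘 f(x) with intervals I_k(x) = [x - 2^k, x) is infinite for every x ≥ 0. -/
open MeasureTheory Set

/-- Dyadic conditional expectation at scale `2^k`. -/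
noncomputable def dyadicE (f : ℝ → ℝ) (k : ℤ) (x : ℝ) : ℝ :=
  (2:ℝ) ^ (-k) *
    ∫ y in Set.Ico ((⌊x / (2:ℝ) ^ k⌋ : ℝ) * (2:ℝ) ^ k)
      ((⌊x / (2:ℝ) ^ k⌋ + 1 : ℝ) * (2:ℝ) ^ k), f y

/-- The average of `f` over `I_k(x) = [x - 2^k, x)`. -/
noncomputable def avgLeft (f : ℝ → ℝ) (k : ℤ) (x : ℝ) : ℝ :=
  (2:ℝ) ^ (-k) * ∫ y in Set.Ico (x - (2:ℝ) ^ k) x, f y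

/-! For `x ≥ 0` the dyadic interval of `x` lies in `[0, ∞)`, so `E_k f(x) = 1` at every scale,
whereas once `2^k ≥ 2x` the window `[x - 2^k, x)` meets `[0, ∞)` only in `[0, x)`, so
`M_{I_k(x)} f(x) = x / 2^k ≤ 1/2`. Hence infinitely many terms of the series are at least `1/4`. -/

lemma dyadicE_indicator_Ici_zero {x : ℝ} (hx : 0 ≤ x) (k : ℤ) :
    dyadicE (indicator (Ici 0) 1) k x = 1 := by
  have hpos : (0:ℝ) < 2 ^ k := by positivity
  have hfloor : (0:ℝ) ≤ ⌊x / 2 ^ k⌋ := mod_cast Int.floor_nonneg.mpr (by positivity)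
  have hsub : Ico ((⌊x / 2 ^ k⌋ : ℝ) * 2 ^ k) ((⌊x / 2 ^ k⌋ + 1 : ℝ) * 2 ^ k) ⊆ Ici 0 :=
    fun y hy => (mul_nonneg hfloor hpos.le).trans hy.1
  rw [dyadicE, setIntegral_indicator measurableSet_Ici, inter_eq_left.mpr hsub]
  simp only [Pi.one_apply, integral_const, smul_eq_mul, mul_one, measureReal_restrict_apply_univ,
    Real.volume_real_Ico]
  rw [show (⌊x / 2 ^ k⌋ + 1 : ℝ) * 2 ^ k - ⌊x / 2 ^ k⌋ * 2 ^ k = 2 ^ k by ring,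
    max_eq_left hpos.le, zpow_neg, inv_mul_cancel₀ hpos.ne']

lemma avgLeft_indicator_Ici_zero {x : ℝ} (hx : 0 ≤ x) {k : ℤ} (hk : x ≤ 2 ^ k) :
    avgLeft (indicator (Ici 0) 1) k x = x / 2 ^ k := by
  rw [avgLeft, setIntegral_indicator measurableSet_Ici, Ico_inter_Ici,
    sup_eq_right.mpr (sub_nonpos.mpr hk)]
  simp [Real.volume_real_Ico, hx, div_eq_inv_mul]

lemma quarter_le_sq_abs_avgLeft_sub_dyadicE {x : ℝ} (hx : 0 ≤ x) {k : ℤ} (hk : 2 * x ≤ 2 ^ k) :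
    1 / 4 ≤ |avgLeft (indicator (Ici 0) 1) k x - dyadicE (indicator (Ici 0) 1) k x| ^ 2 := by
  have hpos : (0:ℝ) < 2 ^ k := by positivity
  rw [avgLeft_indicator_Ici_zero hx (by linarith), dyadicE_indicator_Ici_zero hx, sq_abs]
  have hhalf : x / 2 ^ k ≤ 1 / 2 := by rw [div_le_iff₀ hpos]; linarith
  have hnonneg : 0 ≤ x / 2 ^ k := by positivity
  nlinarith

/-- for `f = χ_{[0,∞)}` and every `x ≥ 0`, the series
`∑_{k ∈ ℤ} |M_{[x-2^k,x)} f(x) − E_k f(x)|²` diverges to `+∞`; consequently the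
square function `S_𝓘 f(x) = (∑_k |...|²)^{1/2}` with `I_k(x) = [x-2^k, x)` is infinite. -/
theorem stmt2 (f : ℝ → ℝ) (hf : f = Set.indicator (Set.Ici (0:ℝ)) 1)
    (x : ℝ) (hx : 0 ≤ x) :
    (∑' k : ℤ, ENNReal.ofReal (|avgLeft f k x - dyadicE f k x| ^ 2)) = ⊤ ∧
      (∑' k : ℤ, ENNReal.ofReal (|avgLeft f k x - dyadicE f k x| ^ 2)) ^ (1/2 : ℝ) = ⊤ := by
  subst hf
  obtain ⟨n, hn⟩ := pow_unbounded_of_one_lt (2 * x) (by norm_num : (1:ℝ) < 2)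
  have hlarge : Ici (n : ℤ) ⊆ {k | ENNReal.ofReal (1 / 4) ≤
      ENNReal.ofReal (|avgLeft (indicator (Ici 0) 1) k x - dyadicE (indicator (Ici 0) 1) k x| ^ 2)} :=
    fun k hk => ENNReal.ofReal_le_ofReal <| quarter_le_sq_abs_avgLeft_sub_dyadicE hx <|
      hn.le.trans <| by simpa using zpow_le_zpow_right₀ one_le_two (mem_Ici.mp hk)
  have htop : ∑' k : ℤ, ENNReal.ofReal
      (|avgLeft (indicator (Ici 0) 1) k x - dyadicE (indicator (Ici 0) 1) k x| ^ 2) = ⊤ := by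
    by_contra hfin
    exact (Ici_infinite (n : ℤ)).mono hlarge
      (ENNReal.finite_const_le_of_tsum_ne_top hfin (by norm_num))
  exact ⟨htop, by rw [htop]; exact ENNReal.top_rpow_of_pos (by norm_num)⟩
end

section
/- There exists a function f ∈ L^∞(ℝ) and a set E ⊂ ℝ of infinite (in particular, nonzero) Lebesgue measure such that for every x ∈ E, the square function value S f(x) = (∑_{k∈ℤ} sup_{I ∈ 𝓘_k} |M_{I+x} f(x) − E_k f(x)|²)^{1/2} equals +∞, where 𝓘_k is the set of intervals containing 0 of length 2^k. -/
open MeasureTheory Set ENNReal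

/-- The square function `S`:  `S f(x) = (∑_{k∈ℤ} sup_{I ∈ 𝓘_k} |M_{I+x} f − E_k f(x)|²)^{1/2}`,
where `𝓘_k` is the family of intervals containing `0` of length `2^k`, an interval
`I ∈ 𝓘_k` being recorded by its left endpoint `a ∈ [-2^k, 0]`, `I = [a, a + 2^k)`. -/
noncomputable def sqFn (f : ℝ → ℝ) (x : ℝ) : ℝ≥0∞ :=
  (∑' k : ℤ, ⨆ a ∈ Set.Icc (-(2:ℝ) ^ k) 0,
      ENNReal.ofReal
        (|(2:ℝ) ^ (-k) * (∫ y in Set.Ico (x + a) (x + a + (2:ℝ) ^ k), f y) -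
            dyadicE f k x| ^ 2)) ^ (1/2 : ℝ)

/-! Take `f = 𝟙_{[0,∞)}` and `x ≥ 0`. Once `2^k > 2x`, the dyadic interval of
length `2^k` containing `x` is `[0, 2^k)`, so `E_k f(x) = 1`, while the interval `[x - 2^k, x)`
carries only the mass `x < 2^k / 2` of `f`. Every scale `k` with `2^k > 2x` therefore contributes
at least `1/4` to `S f(x)²`, and there are infinitely many such scales. -/

theorem ENNReal.tsum_eq_top_of_frequently_le {ι : Type*} {f : ι → ℝ≥0∞} {c : ℝ≥0∞}
    (hc : c ≠ 0) (h : ∃ᶠ i in Filter.cofinite, c ≤ f i) : ∑' i, f i = ∞ := by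
  by_contra hf
  have hlt := (ENNReal.tendsto_cofinite_zero_of_tsum_ne_top hf).eventually
    (gt_mem_nhds (pos_iff_ne_zero.2 hc))
  exact h (hlt.mono fun _ hi => not_le.2 hi)

noncomputable def sqFnTerm (f : ℝ → ℝ) (k : ℤ) (x : ℝ) : ℝ≥0∞ :=
  ⨆ a ∈ Icc (-(2:ℝ) ^ k) 0,
    ENNReal.ofReal
      (|(2:ℝ) ^ (-k) * (∫ y in Ico (x + a) (x + a + (2:ℝ) ^ k), f y) - dyadicE f k x| ^ 2)

theorem sqFn_eq_top_of_frequently_le {f : ℝ → ℝ} {x : ℝ} {c : ℝ≥0∞} (hc : c ≠ 0)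
    (h : ∃ᶠ k in Filter.atTop, c ≤ sqFnTerm f k x) : sqFn f x = ∞ := by
  have hsum : ∑' k, sqFnTerm f k x = ∞ :=
    ENNReal.tsum_eq_top_of_frequently_le hc (h.filter_mono Filter.atTop_le_cofinite)
  show (∑' k, sqFnTerm f k x) ^ (1 / 2 : ℝ) = ∞
  rw [hsum]
  exact ENNReal.top_rpow_of_pos (by norm_num)

theorem dyadicE_of_mem_Ico {f : ℝ → ℝ} {k : ℤ} {x : ℝ} (hx : x ∈ Ico 0 ((2:ℝ) ^ k)) :
    dyadicE f k x = (2:ℝ) ^ (-k) * ∫ y in Ico 0 ((2:ℝ) ^ k), f y := by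
  have hfloor : ⌊x / (2:ℝ) ^ k⌋ = 0 :=
    Int.floor_eq_zero_iff.2 ⟨div_nonneg hx.1 (by positivity), (div_lt_one (by positivity)).2 hx.2⟩
  simp only [dyadicE, hfloor, Int.cast_zero, zero_mul, zero_add, one_mul]

theorem setIntegral_Ico_indicator_Ici_zero {a b : ℝ} (ha : a ≤ 0) (hb : 0 ≤ b) :
    ∫ y in Ico a b, (Ici (0:ℝ)).indicator 1 y = b := by
  have hinter : Ici (0:ℝ) ∩ Ico a b = Ico 0 b := by
    ext y
    simp only [mem_inter_iff, mem_Ici, mem_Ico]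
    exact ⟨fun h => ⟨h.1, h.2.2⟩, fun h => ⟨h.1, ha.trans h.1, h.2⟩⟩
  rw [integral_indicator_one measurableSet_Ici, measureReal_restrict_apply measurableSet_Ici,
    hinter, Real.volume_real_Ico_of_le hb, sub_zero]

theorem quarter_le_sqFnTerm_indicator_Ici {k : ℤ} {x : ℝ} (hx : 0 ≤ x) (hk : 2 * x < 2 ^ k) :
    ENNReal.ofReal (1 / 4) ≤ sqFnTerm ((Ici 0).indicator 1) k x := by
  have hpow : (0:ℝ) < 2 ^ k := by positivity
  have hE : dyadicE ((Ici 0).indicator 1) k x = 1 := by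
    rw [dyadicE_of_mem_Ico ⟨hx, by linarith⟩, setIntegral_Ico_indicator_Ici_zero le_rfl hpow.le,
      zpow_neg, inv_mul_cancel₀ hpow.ne']
  have hmass : ∫ y in Ico (x + -2 ^ k) (x + -2 ^ k + 2 ^ k), (Ici (0:ℝ)).indicator 1 y = x := by
    rw [neg_add_cancel_right]
    exact setIntegral_Ico_indicator_Ici_zero (by linarith) hx
  have havg : (2:ℝ) ^ (-k) * x < 1 / 2 := by
    rw [zpow_neg, inv_mul_lt_iff₀ hpow]
    linarith
  have havg_nonneg : 0 ≤ (2:ℝ) ^ (-k) * x := by positivity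
  refine le_trans ?_ (le_biSup _ (show -(2:ℝ) ^ k ∈ Icc (-2 ^ k) 0 from ⟨le_rfl, by linarith⟩))
  rw [hmass, hE, sq_abs]
  exact ENNReal.ofReal_le_ofReal (by nlinarith)

theorem eventually_two_mul_lt_two_zpow (x : ℝ) : ∀ᶠ k : ℤ in Filter.atTop, 2 * x < 2 ^ k := by
  obtain ⟨n, hn⟩ := pow_unbounded_of_one_lt (2 * x) one_lt_two
  refine Filter.eventually_atTop.2 ⟨n, fun k hk => hn.trans_le ?_⟩
  rw [← zpow_natCast]
  exact zpow_le_zpow_right₀ one_le_two hk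

/-- there exist `f ∈ L^∞(ℝ)` and a set `E` of infinite Lebesgue measure
such that `S f(x) = +∞` for every `x ∈ E`. -/
theorem stmt3 :
    ∃ (f : ℝ → ℝ) (E : Set ℝ), MemLp f ⊤ (volume : Measure ℝ) ∧
      volume E = ⊤ ∧ ∀ x ∈ E, sqFn f x = ⊤ := by
  refine ⟨(Ici 0).indicator 1, Ici 0, (memLp_top_const 1).indicator measurableSet_Ici,
    Real.volume_Ici, fun x hx => ?_⟩
  refine sqFn_eq_top_of_frequently_le (c := ENNReal.ofReal (1 / 4)) (by norm_num) ?_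
  exact ((eventually_two_mul_lt_two_zpow x).mono
    fun k hk => quarter_le_sqFnTerm_indicator_Ici hx hk).frequently
end

section
/- Let f = χ_{[1/2,1)} on ℝ, ℓ > 2, and x ∈ [1/2, 1/2 + 2^{-ℓ}). Then ∑_{k=−ℓ+1}^{−2} |M_{(x−2^k,x]} f(x) − E_k f(x)|² ≥ (ℓ−2)/4, where M_{(x−2^k,x]} f(x) = 2^{-k} ∫_{x−2^k}^x f and E_k f(x) is the average of f over the dyadic interval of length 2^k containing x (which equals 1 for k ≤ −2 since x ∈ [1/2, 3/4)). -/
open MeasureTheory Set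

/-- for `f = χ_{[1/2,1)}`, `ℓ > 2` and `x ∈ [1/2, 1/2 + 2^{-ℓ})`,
`∑_{k=-ℓ+1}^{-2} |M_{(x-2^k,x]} f(x) - E_k f(x)|² ≥ (ℓ-2)/4`. -/
theorem stmt6 (f : ℝ → ℝ) (hf : f = Set.indicator (Set.Ico (1/2 : ℝ) 1) 1)
    (ℓ : ℤ) (hℓ : 2 < ℓ) (x : ℝ) (hx : x ∈ Set.Ico (1/2 : ℝ) (1/2 + (2:ℝ) ^ (-ℓ))) :
    ((ℓ : ℝ) - 2) / 4 ≤
      ∑ k ∈ Finset.Icc (-ℓ + 1) (-2),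
        |(2:ℝ) ^ (-k) * (∫ y in Set.Ioc (x - (2:ℝ) ^ k) x, f y) - dyadicE f k x| ^ 2 := by
  obtain ⟨hx1, hx2⟩ := hx
  have key : ∀ k ∈ Finset.Icc (-ℓ + 1) (-2 : ℤ),
      (1/4 : ℝ) ≤ |(2:ℝ) ^ (-k) * (∫ y in Set.Ioc (x - (2:ℝ) ^ k) x, f y) - dyadicE f k x| ^ 2 := by
    intro k hk
    rw [Finset.mem_Icc] at hk
    obtain ⟨hk1, hk2⟩ := hk
    have hkpos : (0:ℝ) < (2:ℝ)^k := zpow_pos two_pos k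
    have h2k : (2:ℝ)^k ≤ 1/4 := by
      have := zpow_le_zpow_right₀ (a := (2:ℝ)) one_le_two hk2
      norm_num at this; linarith
    have hℓk : (2:ℝ)^(-ℓ) < 2^k := zpow_lt_zpow_right₀ one_lt_two (by omega)
    have hn : (((2:ℤ)^((-k-1).toNat) : ℤ) : ℝ) = (2:ℝ)^(-k-1 : ℤ) := by
      have h1 : ((-k-1).toNat : ℤ) = -k-1 := by omega
      push_cast
      rw [← zpow_natCast (2:ℝ), h1]
    have hprod : (2:ℝ)^(-k-1:ℤ) * (2:ℝ)^k = 1/2 := by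
      rw [← zpow_add₀ (two_ne_zero : (2:ℝ) ≠ 0), show -k - 1 + k = -1 by ring]
      norm_num
    have hfloor : (((⌊x / (2:ℝ) ^ k⌋ : ℤ)) : ℝ) = (2:ℝ)^(-k-1 : ℤ) := by
      have : ⌊x / (2:ℝ) ^ k⌋ = (2:ℤ)^((-k-1).toNat) := by
        rw [Int.floor_eq_iff]
        constructor
        · rw [hn, le_div_iff₀ hkpos, hprod]; linarith
        · rw [hn, div_lt_iff₀ hkpos, add_mul, hprod, one_mul]; linarith
      rw [this, hn]
    have hE : dyadicE f k x = 1 := by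
      rw [dyadicE, hfloor, hprod, add_mul, hprod, one_mul, hf]
      rw [setIntegral_indicator measurableSet_Ico]
      have hsub : Set.Ico (1/2:ℝ) (1/2 + 2^k) ∩ Set.Ico (1/2:ℝ) 1
          = Set.Ico (1/2:ℝ) (1/2 + 2^k) := by
        rw [Set.inter_eq_left]
        intro y hy
        exact ⟨hy.1, by cases hy; linarith⟩
      rw [hsub]
      simp only [Pi.one_apply, setIntegral_const, smul_eq_mul, mul_one]
      rw [Real.volume_real_Ico_of_le (by linarith)]
      rw [show (1/2 + (2:ℝ)^k - 1/2) = (2:ℝ)^k by ring,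
        ← zpow_add₀ (two_ne_zero : (2:ℝ) ≠ 0), neg_add_cancel, zpow_zero]
    have hM : (∫ y in Set.Ioc (x - (2:ℝ) ^ k) x, f y) = x - 1/2 := by
      rw [hf, setIntegral_indicator measurableSet_Ico]
      have hset : Set.Ioc (x - (2:ℝ)^k) x ∩ Set.Ico (1/2:ℝ) 1 = Set.Icc (1/2:ℝ) x := by
        ext y
        simp only [Set.mem_inter_iff, Set.mem_Ioc, Set.mem_Ico, Set.mem_Icc]
        constructor
        · rintro ⟨⟨h1, h2⟩, h3, h4⟩; exact ⟨h3, h2⟩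
        · rintro ⟨h1, h2⟩
          have h2kl : (2:ℝ)^(-ℓ) < 2^k := hℓk
          refine ⟨⟨by linarith, h2⟩, h1, ?_⟩
          have : (2:ℝ)^(-ℓ) ≤ 1/4 := le_of_lt (lt_of_lt_of_le hℓk h2k)
          linarith
      rw [hset]
      simp only [Pi.one_apply, setIntegral_const, smul_eq_mul, mul_one]
      rw [Real.volume_real_Icc_of_le (by linarith)]
    rw [hE, hM]
    have hMle : (2:ℝ)^(-k) * (x - 1/2) ≤ 1/2 := by
      have h1 : (2:ℝ)^(-k) * (x - 1/2) ≤ (2:ℝ)^(-k) * (2:ℝ)^(-ℓ) := by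
        apply mul_le_mul_of_nonneg_left (by linarith) (le_of_lt (zpow_pos two_pos _))
      have h2 : (2:ℝ)^(-k) * (2:ℝ)^(-ℓ) = (2:ℝ)^(-k-ℓ) := by
        rw [← zpow_add₀ (two_ne_zero : (2:ℝ) ≠ 0)]; ring_nf
      have h3 : (2:ℝ)^(-k-ℓ) ≤ (2:ℝ)^(-1:ℤ) :=
        zpow_le_zpow_right₀ one_le_two (by omega)
      norm_num at h3
      linarith
    have hMnn : (0:ℝ) ≤ (2:ℝ)^(-k) * (x - 1/2) := mul_nonneg (le_of_lt (zpow_pos two_pos _)) (by linarith)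
    have habs : (1/2:ℝ) ≤ |(2:ℝ)^(-k) * (x - 1/2) - 1| := by
      rw [abs_sub_comm, abs_of_nonneg (by linarith)]
      linarith
    calc (1/4:ℝ) = (1/2:ℝ)^2 := by norm_num
      _ ≤ |(2:ℝ)^(-k) * (x - 1/2) - 1| ^ 2 :=
          pow_le_pow_left₀ (by norm_num) habs 2
  calc ((ℓ:ℝ) - 2) / 4 = (Finset.Icc (-ℓ + 1) (-2:ℤ)).card • (1/4 : ℝ) := by
        rw [Int.card_Icc]
        have h1 : (-2 + 1 - (-ℓ + 1)).toNat = (ℓ - 2).toNat := by omega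
        rw [h1, nsmul_eq_mul]
        have h2 : (((ℓ - 2).toNat : ℤ) : ℝ) = (ℓ:ℝ) - 2 := by
          have : ((ℓ - 2).toNat : ℤ) = ℓ - 2 := by omega
          rw [this]; push_cast; ring
        push_cast at h2 ⊢
        rw [h2]; ring
    _ ≤ _ := Finset.card_nsmul_le_sum _ _ _ key
end
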